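/- Suppose A ∈ ℝ^{n×n} is singular and ℒ(𝒜) is nonempty. Then the system (A,C,𝒜) is observable if and only if every σ ∈ ℒ(𝒜) satisfies σ(t) = 1 for all t ∈ ℕ and the pair (A,C) is observable in the classical sense, i.e., the matrix [C; CA; ...; CA^{n−1}] has rank n. -/

import Mathlib

open Matrix Filter

/-- An automaton `𝒜 = (M, s)` with `N` nodes: transition matrix `M ∈ {0,1}^{N×N}`
and vector of node labels `s ∈ {0,1}^N`. -/
structure Automaton (N : ℕ) where
  M : Matrix (Fin N) (Fin N) Bool
  s : Fin N → Bool

/-- `σ ∈ ℒ(𝒜)`: the data loss signal `σ` is admissible with respect to `𝒜`. -/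
def Automaton.Admissible {N : ℕ} (𝒜 : Automaton N) (σ : ℕ → Bool) : Prop :=
  ∃ v : ℕ → Fin N, ∀ t : ℕ, 𝒜.M (v t) (v (t + 1)) = true ∧ σ t = 𝒜.s (v t)

/-- A finite word of length `r` generated by `𝒜` (only the first `r` letters of `w` matter). -/
def Automaton.AdmissibleWord {N : ℕ} (𝒜 : Automaton N) (r : ℕ) (w : ℕ → Bool) : Prop :=
  ∃ v : ℕ → Fin N, (∀ t : ℕ, t + 1 < r → 𝒜.M (v t) (v (t + 1)) = true) ∧
    ∀ t : ℕ, t < r → w t = 𝒜.s (v t)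

/-- The reverse automaton `𝒜ʳ = (Mᵀ, s)`. -/
def Automaton.rev {N : ℕ} (𝒜 : Automaton N) : Automaton N :=
  ⟨𝒜.M.transpose, 𝒜.s⟩

/-- Observability of the system `(A, C, 𝒜)`. -/
def Observable {N n p : ℕ} (A : Matrix (Fin n) (Fin n) ℝ) (C : Matrix (Fin p) (Fin n) ℝ)
    (𝒜 : Automaton N) : Prop :=
  ∀ σ : ℕ → Bool, 𝒜.Admissible σ → ∀ x₀ : Fin n → ℝ,
    (∀ t : ℕ, σ t = true → (C * A ^ t).mulVec x₀ = 0) → x₀ = 0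

/-- Practical observability of the system `(A, C, 𝒜)`. -/
def PracticallyObservable {N n p : ℕ} (A : Matrix (Fin n) (Fin n) ℝ)
    (C : Matrix (Fin p) (Fin n) ℝ) (𝒜 : Automaton N) : Prop :=
  ∃ T : ℕ, ∀ σ : ℕ → Bool, 𝒜.Admissible σ → ∀ x₀ : Fin n → ℝ,
    (∀ t : ℕ, t ≤ T → σ t = true → (C * A ^ t).mulVec x₀ = 0) → x₀ = 0

/-- Constructibility of the system `(A, C, 𝒜)`. -/
def Constructible {N n p : ℕ} (A : Matrix (Fin n) (Fin n) ℝ) (C : Matrix (Fin p) (Fin n) ℝ)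
    (𝒜 : Automaton N) : Prop :=
  ∀ σ : ℕ → Bool, 𝒜.Admissible σ → ∃ T : ℕ, ∀ x₀ : Fin n → ℝ,
    (∀ t : ℕ, t ≤ T → σ t = true → (C * A ^ t).mulVec x₀ = 0) → (A ^ T).mulVec x₀ = 0

/-- Practical constructibility of the system `(A, C, 𝒜)`. -/
def PracticallyConstructible {N n p : ℕ} (A : Matrix (Fin n) (Fin n) ℝ)
    (C : Matrix (Fin p) (Fin n) ℝ) (𝒜 : Automaton N) : Prop :=
  ∃ T : ℕ, ∀ σ : ℕ → Bool, 𝒜.Admissible σ → ∀ x₀ : Fin n → ℝ,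
    (∀ t : ℕ, t ≤ T → σ t = true → (C * A ^ t).mulVec x₀ = 0) → (A ^ T).mulVec x₀ = 0

/-- Detectability of the system `(A, C, 𝒜)`. -/
def Detectable {N n p : ℕ} (A : Matrix (Fin n) (Fin n) ℝ) (C : Matrix (Fin p) (Fin n) ℝ)
    (𝒜 : Automaton N) : Prop :=
  ∀ σ : ℕ → Bool, 𝒜.Admissible σ → ∀ x₀ : Fin n → ℝ,
    (∀ t : ℕ, σ t = true → (C * A ^ t).mulVec x₀ = 0) →
      Tendsto (fun t : ℕ => (A ^ t).mulVec x₀) atTop (nhds 0)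

/-- The observability matrix `O_σ(t) = [σ(0)C; σ(1)CA; ...; σ(t−1)CA^{t−1}]`
(blocks stacked vertically, block `i` is row-block `i`). -/
def obsMat {n p : ℕ} (A : Matrix (Fin n) (Fin n) ℝ) (C : Matrix (Fin p) (Fin n) ℝ)
    (σ : ℕ → Bool) (t : ℕ) : Matrix (Fin t × Fin p) (Fin n) ℝ :=
  fun ij k => if σ (ij.1 : ℕ) then (C * A ^ (ij.1 : ℕ)) ij.2 k else 0

/-- State trajectory of the system `x(t+1) = A x(t) + σ(t) B u(t)`. -/
def traj {n m : ℕ} (A : Matrix (Fin n) (Fin n) ℝ) (B : Matrix (Fin n) (Fin m) ℝ)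
    (σ : ℕ → Bool) (u : ℕ → Fin m → ℝ) (x₀ : Fin n → ℝ) : ℕ → Fin n → ℝ
  | 0 => x₀
  | t + 1 => A.mulVec (traj A B σ u x₀ t) + if σ t then B.mulVec (u t) else 0

/-- Controllability of the system `(A, B, 𝒜)`. -/
def Controllable {N n m : ℕ} (A : Matrix (Fin n) (Fin n) ℝ) (B : Matrix (Fin n) (Fin m) ℝ)
    (𝒜 : Automaton N) : Prop :=
  ∀ σ : ℕ → Bool, 𝒜.Admissible σ → ∀ x₀ xf : Fin n → ℝ,
    ∃ u : ℕ → Fin m → ℝ, ∃ T : ℕ, traj A B σ u x₀ T = xf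

/-- Reachability of the system `(A, B, 𝒜)`. -/
def Reachable {N n m : ℕ} (A : Matrix (Fin n) (Fin n) ℝ) (B : Matrix (Fin n) (Fin m) ℝ)
    (𝒜 : Automaton N) : Prop :=
  ∀ σ : ℕ → Bool, 𝒜.Admissible σ → ∀ xf : Fin n → ℝ,
    ∃ u : ℕ → Fin m → ℝ, ∃ T : ℕ, traj A B σ u 0 T = xf

/-- 0-controllability of the system `(A, B, 𝒜)`. -/
def ZeroControllable {N n m : ℕ} (A : Matrix (Fin n) (Fin n) ℝ) (B : Matrix (Fin n) (Fin m) ℝ)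
    (𝒜 : Automaton N) : Prop :=
  ∀ σ : ℕ → Bool, 𝒜.Admissible σ → ∀ x₀ : Fin n → ℝ,
    ∃ u : ℕ → Fin m → ℝ, ∃ T : ℕ, traj A B σ u x₀ T = 0

/-- Stabilizability of the system `(A, B, 𝒜)`. -/
def Stabilizable {N n m : ℕ} (A : Matrix (Fin n) (Fin n) ℝ) (B : Matrix (Fin n) (Fin m) ℝ)
    (𝒜 : Automaton N) : Prop :=
  ∀ σ : ℕ → Bool, 𝒜.Admissible σ → ∀ x₀ : Fin n → ℝ,
    ∃ u : ℕ → Fin m → ℝ, Tendsto (fun t : ℕ => traj A B σ u x₀ t) atTop (nhds 0)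

/-- Practical controllability of the system `(A, B, 𝒜)`. -/
def PracticallyControllable {N n m : ℕ} (A : Matrix (Fin n) (Fin n) ℝ)
    (B : Matrix (Fin n) (Fin m) ℝ) (𝒜 : Automaton N) : Prop :=
  ∃ T : ℕ, ∀ σ : ℕ → Bool, 𝒜.Admissible σ → ∀ x₀ xf : Fin n → ℝ,
    ∃ u : ℕ → Fin m → ℝ, ∃ t : ℕ, t ≤ T ∧ traj A B σ u x₀ t = xf

/-- Practical reachability of the system `(A, B, 𝒜)`. -/
def PracticallyReachable {N n m : ℕ} (A : Matrix (Fin n) (Fin n) ℝ)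
    (B : Matrix (Fin n) (Fin m) ℝ) (𝒜 : Automaton N) : Prop :=
  ∃ T : ℕ, ∀ σ : ℕ → Bool, 𝒜.Admissible σ → ∀ xf : Fin n → ℝ,
    ∃ u : ℕ → Fin m → ℝ, ∃ t : ℕ, t ≤ T ∧ traj A B σ u 0 t = xf

/-- Practical 0-controllability of the system `(A, B, 𝒜)`. -/
def PracticallyZeroControllable {N n m : ℕ} (A : Matrix (Fin n) (Fin n) ℝ)
    (B : Matrix (Fin n) (Fin m) ℝ) (𝒜 : Automaton N) : Prop :=
  ∃ T : ℕ, ∀ σ : ℕ → Bool, 𝒜.Admissible σ → ∀ x₀ : Fin n → ℝ,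
    ∃ u : ℕ → Fin m → ℝ, ∃ t : ℕ, t ≤ T ∧ traj A B σ u x₀ t = 0

/-- The reachability matrix `C_σ(t) = [σ(t−1)B, σ(t−2)AB, ..., σ(0)A^{t−1}B]`
(block-column `i` is `σ(t−1−i) Aⁱ B`). -/
def reachMat {n m : ℕ} (A : Matrix (Fin n) (Fin n) ℝ) (B : Matrix (Fin n) (Fin m) ℝ)
    (σ : ℕ → Bool) (t : ℕ) : Matrix (Fin n) (Fin t × Fin m) ℝ :=
  fun k ij => if σ (t - 1 - (ij.1 : ℕ)) then (A ^ (ij.1 : ℕ) * B) k ij.2 else 0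

/-- State trajectory of the system with varying delays
`x(t+1) = A x(t) + Σ_{t' ≤ t, t' + d(t') = t} B u(t')`. -/
def delayTraj {n m : ℕ} (A : Matrix (Fin n) (Fin n) ℝ) (B : Matrix (Fin n) (Fin m) ℝ)
    (d : ℕ → ℕ) (u : ℕ → Fin m → ℝ) (x₀ : Fin n → ℝ) : ℕ → Fin n → ℝ
  | 0 => x₀
  | t + 1 => A.mulVec (delayTraj A B d u x₀ t) +
      ∑ t' ∈ Finset.range (t + 1), if t' + d t' = t then B.mulVec (u t') else 0

/-- Controllability of the system with varying delays `(A, B, 𝒟)`. -/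
def DelayControllable {n m : ℕ} (A : Matrix (Fin n) (Fin n) ℝ) (B : Matrix (Fin n) (Fin m) ℝ)
    (𝒟 : Finset ℕ) : Prop :=
  ∀ d : ℕ → ℕ, (∀ t : ℕ, d t ∈ 𝒟) → ∀ x₀ xf : Fin n → ℝ,
    ∃ u : ℕ → Fin m → ℝ, ∃ T : ℕ, delayTraj A B d u x₀ T = xf

/-- The controllability matrix `C̄_d(t)` of a system with varying delays: its `i`-th
block column (here indexed by `j = i - 1 : Fin t`) is `A^{t−i−d(i−1)} B` when
`i + d(i−1) ≤ t`, and the zero block otherwise. -/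
def delayCtrbMat {n m : ℕ} (A : Matrix (Fin n) (Fin n) ℝ) (B : Matrix (Fin n) (Fin m) ℝ)
    (d : ℕ → ℕ) (t : ℕ) : Matrix (Fin n) (Fin t × Fin m) ℝ :=
  fun k jl => if (jl.1 : ℕ) + 1 + d (jl.1 : ℕ) ≤ t
    then (A ^ (t - ((jl.1 : ℕ) + 1) - d (jl.1 : ℕ)) * B) k jl.2 else 0

-- The actuation signal `τ_d` of a delay signal `d`: `τ_d(t) = 1` iff there is
-- `t'` with `t' + d(t') = t`.
open Classical in
noncomputable def actuation (d : ℕ → ℕ) (t : ℕ) : Bool :=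
  if ∃ t' : ℕ, t' + d t' = t then true else false

/-- The classical observability matrix `[C; CA; ...; CA^{n-1}]`. -/
def classicalObsMat {n p : ℕ} (A : Matrix (Fin n) (Fin n) ℝ) (C : Matrix (Fin p) (Fin n) ℝ) :
    Matrix (Fin n × Fin p) (Fin n) ℝ :=
  fun ij k => (C * A ^ (ij.1 : ℕ)) ij.2 k

/-!
A singular `A` has a nonzero kernel vector `z`, and `C Aᵗ z = 0` for every `t ≥ 1`; so `z` is
invisible to any admissible signal that loses the measurement at time `0`. Admissible signals are
closed under shifts, hence observability forces every admissible signal to be identically `1`.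
For such signals observability is classical observability, which by Cayley–Hamilton only
involves the powers `Aᵗ` with `t < n`.
-/

open Polynomial in
theorem Matrix.mulVec_mul_pow_eq_zero_of_forall_lt_card {R ι κ : Type*} [CommRing R]
    [Nontrivial R] [Fintype ι] [DecidableEq ι] (A : Matrix ι ι R) (C : Matrix κ ι R)
    {x : ι → R} (h : ∀ t < Fintype.card ι, (C * A ^ t) *ᵥ x = 0) (t : ℕ) :
    (C * A ^ t) *ᵥ x = 0 := by
  have hdeg : (X ^ t %ₘ A.charpoly).degree < Fintype.card ι := by
    rw [← A.charpoly_degree_eq_dim]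
    exact degree_modByMonic_lt _ A.charpoly_monic
  rw [A.pow_eq_aeval_mod_charpoly, aeval_eq_sum_range, Matrix.mul_sum, Matrix.sum_mulVec]
  refine Finset.sum_eq_zero fun i _ => ?_
  rw [Matrix.mul_smul, Matrix.smul_mulVec]
  rcases lt_or_ge i (Fintype.card ι) with hi | hi
  · rw [h i hi, smul_zero]
  · rw [coeff_eq_zero_of_degree_lt (hdeg.trans_le (by exact_mod_cast hi)), zero_smul]

theorem Matrix.rank_eq_card_iff {K m n : Type*} [Field K] [Fintype m] [Fintype n]
    (M : Matrix m n K) : M.rank = Fintype.card n ↔ ∀ v, M *ᵥ v = 0 → v = 0 := by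
  rw [← ker_mulVecLin_eq_bot_iff, ← Submodule.finrank_eq_zero, rank]
  have := M.mulVecLin.finrank_range_add_finrank_ker
  rw [Module.finrank_fintype_fun_eq_card] at this
  omega

theorem Matrix.exists_ne_zero_mul_pow_succ_mulVec_eq_zero {K ι κ : Type*} [Field K] [Fintype ι]
    [DecidableEq ι] {A : Matrix ι ι K} (hA : A.det = 0) (C : Matrix κ ι K) :
    ∃ z ≠ 0, ∀ t, (C * A ^ (t + 1)) *ᵥ z = 0 := by
  obtain ⟨z, hz0, hz⟩ := exists_mulVec_eq_zero_iff.mpr hA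
  refine ⟨z, hz0, fun t => ?_⟩
  rw [pow_succ, ← mulVec_mulVec, ← mulVec_mulVec, hz, mulVec_zero, mulVec_zero]

theorem Automaton.Admissible.shift {N : ℕ} {𝒜 : Automaton N} {σ : ℕ → Bool}
    (h : 𝒜.Admissible σ) (k : ℕ) : 𝒜.Admissible (fun t => σ (t + k)) := by
  obtain ⟨v, hv⟩ := h
  refine ⟨fun t => v (t + k), fun t => ⟨?_, (hv (t + k)).2⟩⟩
  simpa only [Nat.add_right_comm] using (hv (t + k)).1

section

variable {N n p : ℕ} {A : Matrix (Fin n) (Fin n) ℝ} {C : Matrix (Fin p) (Fin n) ℝ}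

theorem classicalObsMat_mulVec_eq_zero_iff {x : Fin n → ℝ} :
    classicalObsMat A C *ᵥ x = 0 ↔ ∀ t, (C * A ^ t) *ᵥ x = 0 := by
  refine ⟨fun h => mulVec_mul_pow_eq_zero_of_forall_lt_card A C fun t ht => ?_,
    fun h => funext fun ij => congrFun (h ij.1) ij.2⟩
  rw [Fintype.card_fin] at ht
  exact funext fun j => congrFun h (⟨t, ht⟩, j)

theorem rank_classicalObsMat_eq_iff :
    (classicalObsMat A C).rank = n ↔ ∀ x, (∀ t, (C * A ^ t) *ᵥ x = 0) → x = 0 := by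
  simp only [← classicalObsMat_mulVec_eq_zero_iff, ← rank_eq_card_iff, Fintype.card_fin]

theorem Observable.eq_true_of_admissible {𝒜 : Automaton N} (hA : A.det = 0)
    (hobs : Observable A C 𝒜) {σ : ℕ → Bool} (hσ : 𝒜.Admissible σ) (t : ℕ) : σ t = true := by
  obtain ⟨z, hz0, hz⟩ := exists_ne_zero_mul_pow_succ_mulVec_eq_zero hA C
  by_contra hσt
  refine hz0 (hobs _ (hσ.shift t) z fun s hs => ?_)
  cases s with
  | zero => exact absurd (by simpa only [zero_add] using hs) hσt
  | succ s => exact hz s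

end

/-- If `A` is singular and `ℒ(𝒜) ≠ ∅`, then `(A,C,𝒜)` is observable iff every
admissible signal is identically `1` and `(A,C)` is observable in the classical sense. -/
theorem singular_observable_iff {N n p : ℕ} (A : Matrix (Fin n) (Fin n) ℝ)
    (C : Matrix (Fin p) (Fin n) ℝ) (𝒜 : Automaton N) (hA : A.det = 0)
    (hne : ∃ σ : ℕ → Bool, 𝒜.Admissible σ) :
    Observable A C 𝒜 ↔
      ((∀ σ : ℕ → Bool, 𝒜.Admissible σ → ∀ t : ℕ, σ t = true) ∧
        (classicalObsMat A C).rank = n) := by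
  constructor
  · intro hobs
    obtain ⟨σ, hσ⟩ := hne
    exact ⟨fun σ hσ => hobs.eq_true_of_admissible hA hσ,
      rank_classicalObsMat_eq_iff.2 fun x hx => hobs σ hσ x fun t _ => hx t⟩
  · rintro ⟨hall, hrank⟩ σ hσ x hx
    exact rank_classicalObsMat_eq_iff.1 hrank x fun t => hx t (hall σ hσ t)
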